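/- For any w ∈ V (zero-mean, z-even, L^2 vector field with div_2(w̄) = 0) and any v ∈ (H^2(O))^2, the nonlinear form b satisfies ⟨b(w,v), v⟩_{L^2} = 0, where b(u,v) = (u·∇_2)v − (∫_{-h}^z div_2 u(·,·,ξ) dξ) ∂_z v. -/

import Mathlib

/-!
With `e = |v|²/2` and the vertical velocity `W = -∫_{-h}^z div₂ w`, the field `(w₁, w₂, W)` is
divergence free, so `b(w, v)·v = ∂ₓ(w₁ e) + ∂_y(w₂ e) + ∂_z(W e)`. The first two terms integrate
to zero by horizontal periodicity. The last one integrates in `z` to the values of `W e` at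
`z = -h`, where `W` vanishes trivially, and at `z = 0`, where `W = -div₂ w̄ = 0`.
-/

open MeasureTheory intervalIntegral

/-- Horizontal divergence `div₂ w = ∂ₓ w₁ + ∂_y w₂`. -/
noncomputable def div2 (w : ℝ → ℝ → ℝ → ℝ × ℝ) (x y z : ℝ) : ℝ :=
  deriv (fun x' => (w x' y z).1) x + deriv (fun y' => (w x y' z).2) y

/-- The primitive-equations nonlinearity
`b(u,v) = (u·∇₂)v − (∫_{-h}^z div₂ u dξ) ∂_z v`. -/
noncomputable def bPE (h : ℝ) (u v : ℝ → ℝ → ℝ → ℝ × ℝ) (x y z : ℝ) : ℝ × ℝ :=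
  (u x y z).1 • deriv (fun x' => v x' y z) x
    + (u x y z).2 • deriv (fun y' => v x y' z) y
    - (∫ ξ in (-h)..z, div2 u x y ξ) • deriv (fun z' => v x y z') z

open Function Set

def uncurry₃ {α β γ δ : Type*} (u : α → β → γ → δ) (ζ : α × β × γ) : δ := u ζ.1 ζ.2.1 ζ.2.2

section Integral3
variable {E : Type*} [NormedAddCommGroup E] [NormedSpace ℝ E]

theorem intervalIntegral_intervalIntegral_swap_of_continuous {g : ℝ → ℝ → E}
    (hg : Continuous (uncurry g)) (a b c d : ℝ) :
    ∫ x in a..b, ∫ y in c..d, g x y = ∫ y in c..d, ∫ x in a..b, g x y :=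
  intervalIntegral_intervalIntegral_swap <|
    (hg.continuousOn.integrableOn_compact (isCompact_uIcc.prod isCompact_uIcc)).mono_set
      (prod_mono uIoc_subset_uIcc uIoc_subset_uIcc)

variable {g g₁ g₂ : ℝ → ℝ → ℝ → E} {a₁ b₁ a₂ b₂ a₃ b₃ : ℝ}

theorem integral3_add (h₁ : Continuous (uncurry₃ g₁)) (h₂ : Continuous (uncurry₃ g₂)) :
    ∫ x in a₁..b₁, ∫ y in a₂..b₂, ∫ z in a₃..b₃, (g₁ x y z + g₂ x y z)
      = (∫ x in a₁..b₁, ∫ y in a₂..b₂, ∫ z in a₃..b₃, g₁ x y z)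
        + ∫ x in a₁..b₁, ∫ y in a₂..b₂, ∫ z in a₃..b₃, g₂ x y z := by
  unfold uncurry₃ at h₁ h₂
  have hz : ∀ x y, ∫ z in a₃..b₃, (g₁ x y z + g₂ x y z)
      = (∫ z in a₃..b₃, g₁ x y z) + ∫ z in a₃..b₃, g₂ x y z := fun x y =>
    integral_add (Continuous.intervalIntegrable (by fun_prop) _ _)
      (Continuous.intervalIntegrable (by fun_prop) _ _)
  have hy : ∀ x, ∫ y in a₂..b₂, ((∫ z in a₃..b₃, g₁ x y z) + ∫ z in a₃..b₃, g₂ x y z)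
      = (∫ y in a₂..b₂, ∫ z in a₃..b₃, g₁ x y z) + ∫ y in a₂..b₂, ∫ z in a₃..b₃, g₂ x y z :=
    fun x => integral_add (Continuous.intervalIntegrable (by fun_prop) _ _)
      (Continuous.intervalIntegrable (by fun_prop) _ _)
  simp only [hz, hy]
  exact integral_add (Continuous.intervalIntegrable (by fun_prop) _ _)
    (Continuous.intervalIntegrable (by fun_prop) _ _)

theorem integral3_add_add {g₃ : ℝ → ℝ → ℝ → E} (h₁ : Continuous (uncurry₃ g₁))
    (h₂ : Continuous (uncurry₃ g₂)) (h₃ : Continuous (uncurry₃ g₃)) :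
    ∫ x in a₁..b₁, ∫ y in a₂..b₂, ∫ z in a₃..b₃, (g₁ x y z + g₂ x y z + g₃ x y z)
      = (∫ x in a₁..b₁, ∫ y in a₂..b₂, ∫ z in a₃..b₃, g₁ x y z)
        + (∫ x in a₁..b₁, ∫ y in a₂..b₂, ∫ z in a₃..b₃, g₂ x y z)
        + ∫ x in a₁..b₁, ∫ y in a₂..b₂, ∫ z in a₃..b₃, g₃ x y z := by
  rw [integral3_add (g₁ := fun x y z => g₁ x y z + g₂ x y z) (h₁.add h₂) h₃,
    integral3_add h₁ h₂]

theorem integral3_eq_zero_of_integral_fst (hg : Continuous (uncurry₃ g))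
    (h : ∀ y z, ∫ x in a₁..b₁, g x y z = 0) :
    ∫ x in a₁..b₁, ∫ y in a₂..b₂, ∫ z in a₃..b₃, g x y z = 0 := by
  unfold uncurry₃ at hg
  have hxz : ∀ y, ∫ x in a₁..b₁, ∫ z in a₃..b₃, g x y z = 0 := fun y => by
    rw [intervalIntegral_intervalIntegral_swap_of_continuous (by fun_prop)]
    simp [h]
  rw [intervalIntegral_intervalIntegral_swap_of_continuous (by fun_prop)]
  simp [hxz]

theorem integral3_eq_zero_of_integral_snd (hg : Continuous (uncurry₃ g))
    (h : ∀ x z, ∫ y in a₂..b₂, g x y z = 0) :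
    ∫ x in a₁..b₁, ∫ y in a₂..b₂, ∫ z in a₃..b₃, g x y z = 0 := by
  unfold uncurry₃ at hg
  have hyz : ∀ x, ∫ y in a₂..b₂, ∫ z in a₃..b₃, g x y z = 0 := fun x => by
    rw [intervalIntegral_intervalIntegral_swap_of_continuous (by fun_prop)]
    simp [h]
  simp [hyz]

end Integral3

section Derivatives
variable {E : Type*} [NormedAddCommGroup E] [NormedSpace ℝ E]

theorem HasDerivAt.fst {𝕜 F G : Type*} [NontriviallyNormedField 𝕜] [NormedAddCommGroup F]
    [NormedSpace 𝕜 F] [NormedAddCommGroup G] [NormedSpace 𝕜 G] {f : 𝕜 → F × G} {f' : F × G} {t : 𝕜}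
    (hf : HasDerivAt f f' t) : HasDerivAt (fun t => (f t).1) f'.1 t :=
  (hasFDerivAt_fst (p := f t)).comp_hasDerivAt t hf

theorem HasDerivAt.snd {𝕜 F G : Type*} [NontriviallyNormedField 𝕜] [NormedAddCommGroup F]
    [NormedSpace 𝕜 F] [NormedAddCommGroup G] [NormedSpace 𝕜 G] {f : 𝕜 → F × G} {f' : F × G} {t : 𝕜}
    (hf : HasDerivAt f f' t) : HasDerivAt (fun t => (f t).2) f'.2 t :=
  (hasFDerivAt_snd (p := f t)).comp_hasDerivAt t hf

theorem HasDerivAt.half_sq_add_sq {f : ℝ → ℝ × ℝ} {f' : ℝ × ℝ} {t : ℝ}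
    (hf : HasDerivAt f f' t) :
    HasDerivAt (fun t => ((f t).1 ^ 2 + (f t).2 ^ 2) / 2) (f'.1 * (f t).1 + f'.2 * (f t).2) t := by
  refine (((hf.fst.fun_pow 2).fun_add (hf.snd.fun_pow 2)).div_const 2).congr_deriv ?_
  push_cast
  ring

theorem hasDerivAt_intervalIntegral_of_contDiff {F : ℝ → ℝ → E} (hF : ContDiff ℝ 1 (uncurry F))
    (a b s : ℝ) :
    HasDerivAt (fun s' => ∫ t in a..b, F s' t) (∫ t in a..b, deriv (fun s' => F s' t) s) s := by
  let F' : ℝ → ℝ → E := fun s t => fderiv ℝ (uncurry F) (s, t) (1, 0)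
  have hF' : Continuous (uncurry F') :=
    (hF.continuous_fderiv one_ne_zero).clm_apply continuous_const
  have hderiv : ∀ s t, HasDerivAt (fun s' => F s' t) (F' s t) s := fun s t =>
    (hF.differentiable one_ne_zero (s, t)).hasFDerivAt.comp_hasDerivAt (f := fun s' => (s', t)) s
      ((hasDerivAt_id s).prodMk (hasDerivAt_const s t))
  obtain ⟨C, hC⟩ := (isCompact_Icc.prod isCompact_uIcc).exists_bound_of_continuousOn
    (s := Icc (s - 1) (s + 1) ×ˢ uIcc a b) hF'.continuousOn
  have hFc : Continuous (uncurry F) := hF.continuous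
  have := hasDerivAt_integral_of_dominated_loc_of_deriv_le (F := F) (F' := F')
    (bound := fun _ => C)
    (Icc_mem_nhds (by linarith) (by linarith))
    (Filter.Eventually.of_forall fun s' =>
      (Continuous.aestronglyMeasurable (by fun_prop : Continuous fun t => uncurry F (s', t))))
    (Continuous.intervalIntegrable (by fun_prop : Continuous fun t => uncurry F (s, t)) _ _)
    (Continuous.aestronglyMeasurable (by fun_prop : Continuous fun t => uncurry F' (s, t)))
    (ae_of_all _ fun t ht s' hs' => hC (s', t) ⟨hs', uIoc_subset_uIcc ht⟩)
    (intervalIntegrable_const (μ := volume)) (ae_of_all _ fun t _ s' _ => hderiv s' t)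
  simpa only [(hderiv s _).deriv] using this.2

end Derivatives

section Partials
variable {E : Type*} [NormedAddCommGroup E] [NormedSpace ℝ E] {u : ℝ → ℝ → ℝ → E}

theorem hasDerivAt_partial₁ (hu : Differentiable ℝ (uncurry₃ u)) (x y z : ℝ) :
    HasDerivAt (fun x' => u x' y z) (fderiv ℝ (uncurry₃ u) (x, y, z) (1, 0, 0)) x :=
  (hu _).hasFDerivAt.comp_hasDerivAt (f := fun x' => (x', y, z)) x
    ((hasDerivAt_id x).prodMk ((hasDerivAt_const x y).prodMk (hasDerivAt_const x z)))

theorem hasDerivAt_partial₂ (hu : Differentiable ℝ (uncurry₃ u)) (x y z : ℝ) :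
    HasDerivAt (fun y' => u x y' z) (fderiv ℝ (uncurry₃ u) (x, y, z) (0, 1, 0)) y :=
  (hu _).hasFDerivAt.comp_hasDerivAt (f := fun y' => (x, y', z)) y
    ((hasDerivAt_const y x).prodMk ((hasDerivAt_id y).prodMk (hasDerivAt_const y z)))

theorem hasDerivAt_partial₃ (hu : Differentiable ℝ (uncurry₃ u)) (x y z : ℝ) :
    HasDerivAt (fun z' => u x y z') (fderiv ℝ (uncurry₃ u) (x, y, z) (0, 0, 1)) z :=
  (hu _).hasFDerivAt.comp_hasDerivAt (f := fun z' => (x, y, z')) z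
    ((hasDerivAt_const z x).prodMk ((hasDerivAt_const z y).prodMk (hasDerivAt_id z)))

theorem continuous_partial₁ (hu : ContDiff ℝ 1 (uncurry₃ u)) :
    Continuous (uncurry₃ fun x y z => deriv (fun x' => u x' y z) x) :=
  ((hu.continuous_fderiv one_ne_zero).clm_apply continuous_const).congr fun ζ =>
    (hasDerivAt_partial₁ (hu.differentiable one_ne_zero) ζ.1 ζ.2.1 ζ.2.2).deriv.symm

theorem continuous_partial₂ (hu : ContDiff ℝ 1 (uncurry₃ u)) :
    Continuous (uncurry₃ fun x y z => deriv (fun y' => u x y' z) y) :=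
  ((hu.continuous_fderiv one_ne_zero).clm_apply continuous_const).congr fun ζ =>
    (hasDerivAt_partial₂ (hu.differentiable one_ne_zero) ζ.1 ζ.2.1 ζ.2.2).deriv.symm

theorem continuous_partial₃ (hu : ContDiff ℝ 1 (uncurry₃ u)) :
    Continuous (uncurry₃ fun x y z => deriv (fun z' => u x y z') z) :=
  ((hu.continuous_fderiv one_ne_zero).clm_apply continuous_const).congr fun ζ =>
    (hasDerivAt_partial₃ (hu.differentiable one_ne_zero) ζ.1 ζ.2.1 ζ.2.2).deriv.symm

theorem integral3_deriv_partial₁_eq_zero [CompleteSpace E] {a₁ b₁ a₂ b₂ a₃ b₃ : ℝ}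
    (hu : ContDiff ℝ 1 (uncurry₃ u))
    (hab : ∀ y z, u b₁ y z = u a₁ y z) :
    ∫ x in a₁..b₁, ∫ y in a₂..b₂, ∫ z in a₃..b₃, deriv (fun x' => u x' y z) x = 0 :=
  integral3_eq_zero_of_integral_fst (continuous_partial₁ hu) fun y z => by
    rw [integral_deriv_eq_sub
      (fun x _ => (hasDerivAt_partial₁ (hu.differentiable one_ne_zero) x y z).differentiableAt)
      (((continuous_partial₁ hu).comp
        (by fun_prop : Continuous fun x : ℝ => (x, y, z))).intervalIntegrable _ _),
      hab, sub_self]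

theorem integral3_deriv_partial₂_eq_zero [CompleteSpace E] {a₁ b₁ a₂ b₂ a₃ b₃ : ℝ}
    (hu : ContDiff ℝ 1 (uncurry₃ u))
    (hab : ∀ x z, u x b₂ z = u x a₂ z) :
    ∫ x in a₁..b₁, ∫ y in a₂..b₂, ∫ z in a₃..b₃, deriv (fun y' => u x y' z) y = 0 :=
  integral3_eq_zero_of_integral_snd (continuous_partial₂ hu) fun x z => by
    rw [integral_deriv_eq_sub
      (fun y _ => (hasDerivAt_partial₂ (hu.differentiable one_ne_zero) x y z).differentiableAt)
      (((continuous_partial₂ hu).comp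
        (by fun_prop : Continuous fun y : ℝ => (x, y, z))).intervalIntegrable _ _),
      hab, sub_self]

end Partials

section PrimitiveEquations
variable {h : ℝ} {w v : ℝ → ℝ → ℝ → ℝ × ℝ}

noncomputable def kineticDensity (v : ℝ → ℝ → ℝ → ℝ × ℝ) (x y z : ℝ) : ℝ :=
  ((v x y z).1 ^ 2 + (v x y z).2 ^ 2) / 2

/-- The vertical velocity `W`, for which `b(w, v) = w₁ ∂ₓv + w₂ ∂_y v + W ∂_z v`. -/
noncomputable def verticalVelocity (h : ℝ) (w : ℝ → ℝ → ℝ → ℝ × ℝ) (x y z : ℝ) : ℝ :=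
  -∫ ξ in (-h)..z, div2 w x y ξ

theorem contDiff_kineticDensity {n : WithTop ℕ∞} (hv : ContDiff ℝ n (uncurry₃ v)) :
    ContDiff ℝ n (uncurry₃ (kineticDensity v)) :=
  ((hv.fst.pow 2).add (hv.snd.pow 2)).div_const 2

theorem continuous_div2 (hw : ContDiff ℝ 1 (uncurry₃ w)) : Continuous (uncurry₃ (div2 w)) :=
  (continuous_partial₁ (u := fun x y z => (w x y z).1) hw.fst).add
    (continuous_partial₂ (u := fun x y z => (w x y z).2) hw.snd)

theorem integral_div2_eq_zero {a b : ℝ} (hw : ContDiff ℝ 1 (uncurry₃ w))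
    (hdiv : ∀ x y, deriv (fun x' => (∫ z in a..b, w x' y z).1) x
        + deriv (fun y' => (∫ z in a..b, w x y' z).2) y = 0) (x y : ℝ) :
    ∫ z in a..b, div2 w x y z = 0 := by
  have hw₀ : Continuous (uncurry₃ w) := hw.continuous
  unfold uncurry₃ at hw₀
  have hfst : ∀ x' y', (∫ z in a..b, w x' y' z).1 = ∫ z in a..b, (w x' y' z).1 := fun x' y' =>
    ((ContinuousLinearMap.fst ℝ ℝ ℝ).intervalIntegral_comp_comm
      (Continuous.intervalIntegrable (by fun_prop) _ _)).symm
  have hsnd : ∀ x' y', (∫ z in a..b, w x' y' z).2 = ∫ z in a..b, (w x' y' z).2 := fun x' y' =>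
    ((ContinuousLinearMap.snd ℝ ℝ ℝ).intervalIntegral_comp_comm
      (Continuous.intervalIntegrable (by fun_prop) _ _)).symm
  have h₁ : deriv (fun x' => ∫ z in a..b, (w x' y z).1) x
      = ∫ z in a..b, deriv (fun x' => (w x' y z).1) x :=
    (hasDerivAt_intervalIntegral_of_contDiff (F := fun x' z => (w x' y z).1)
      (hw.fst.comp (by fun_prop : ContDiff ℝ 1 fun p : ℝ × ℝ => (p.1, y, p.2))) a b x).deriv
  have h₂ : deriv (fun y' => ∫ z in a..b, (w x y' z).2) y
      = ∫ z in a..b, deriv (fun y' => (w x y' z).2) y :=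
    (hasDerivAt_intervalIntegral_of_contDiff (F := fun y' z => (w x y' z).2)
      (hw.snd.comp (by fun_prop : ContDiff ℝ 1 fun p : ℝ × ℝ => (x, p.1, p.2))) a b y).deriv
  have hxy := hdiv x y
  simp only [hfst, hsnd, h₁, h₂] at hxy
  rw [← hxy]
  exact integral_add
    (((continuous_partial₁ (u := fun x y z => (w x y z).1) hw.fst).comp
      (by fun_prop : Continuous fun z : ℝ => (x, y, z))).intervalIntegrable _ _)
    (((continuous_partial₂ (u := fun x y z => (w x y z).2) hw.snd).comp
      (by fun_prop : Continuous fun z : ℝ => (x, y, z))).intervalIntegrable _ _)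

theorem hasDerivAt_verticalVelocity (hw : ContDiff ℝ 1 (uncurry₃ w)) (x y z : ℝ) :
    HasDerivAt (fun z' => verticalVelocity h w x y z') (-div2 w x y z) z := by
  have hc : Continuous fun ξ => div2 w x y ξ :=
    (continuous_div2 hw).comp (by fun_prop : Continuous fun ξ : ℝ => (x, y, ξ))
  exact (integral_hasDerivAt_right (hc.intervalIntegrable _ _)
    hc.stronglyMeasurable.stronglyMeasurableAtFilter hc.continuousAt).neg

theorem continuous_verticalVelocity (hw : ContDiff ℝ 1 (uncurry₃ w)) :
    Continuous (uncurry₃ (verticalVelocity h w)) := by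
  have hdiv := continuous_div2 hw
  unfold uncurry₃ at hdiv ⊢
  unfold verticalVelocity
  fun_prop

theorem hasDerivAt_verticalFlux (hw : ContDiff ℝ 1 (uncurry₃ w))
    (hv : Differentiable ℝ (uncurry₃ v)) (x y z : ℝ) :
    HasDerivAt (fun z' => verticalVelocity h w x y z' * kineticDensity v x y z')
      (-div2 w x y z * kineticDensity v x y z + verticalVelocity h w x y z *
        ((deriv (fun z' => v x y z') z).1 * (v x y z).1
          + (deriv (fun z' => v x y z') z).2 * (v x y z).2)) z :=
  (hasDerivAt_verticalVelocity hw x y z).mul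
    (hasDerivAt_partial₃ hv x y z).differentiableAt.hasDerivAt.half_sq_add_sq

theorem continuous_deriv_verticalFlux (hw : ContDiff ℝ 1 (uncurry₃ w))
    (hv : ContDiff ℝ 1 (uncurry₃ v)) :
    Continuous (uncurry₃ fun x y z =>
      deriv (fun z' => verticalVelocity h w x y z' * kineticDensity v x y z') z) := by
  have hdiv := continuous_div2 hw
  have hW := continuous_verticalVelocity (h := h) hw
  have he := (contDiff_kineticDensity hv).continuous
  have hv₀ := hv.continuous
  have hvz := continuous_partial₃ hv
  unfold uncurry₃ at *
  simp only [(hasDerivAt_verticalFlux hw (hv.differentiable one_ne_zero) _ _ _).deriv]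
  fun_prop

theorem integral_deriv_verticalFlux_eq_zero (hw : ContDiff ℝ 1 (uncurry₃ w))
    (hv : ContDiff ℝ 1 (uncurry₃ v))
    (hdiv : ∀ x y, deriv (fun x' => (∫ z in (-h)..0, w x' y z).1) x
        + deriv (fun y' => (∫ z in (-h)..0, w x y' z).2) y = 0) (x y : ℝ) :
    ∫ z in (-h)..0, deriv (fun z' => verticalVelocity h w x y z' * kineticDensity v x y z') z
      = 0 := by
  rw [integral_deriv_eq_sub
    (fun z _ =>
      (hasDerivAt_verticalFlux hw (hv.differentiable one_ne_zero) x y z).differentiableAt)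
    (((continuous_deriv_verticalFlux hw hv).comp
      (by fun_prop : Continuous fun z : ℝ => (x, y, z))).intervalIntegrable _ _)]
  simp [verticalVelocity, integral_div2_eq_zero hw hdiv]

theorem inner_bPE_eq_sum_deriv_flux (hw : ContDiff ℝ 1 (uncurry₃ w))
    (hv : Differentiable ℝ (uncurry₃ v)) (x y z : ℝ) :
    (bPE h w v x y z).1 * (v x y z).1 + (bPE h w v x y z).2 * (v x y z).2
      = deriv (fun x' => (w x' y z).1 * kineticDensity v x' y z) x
        + deriv (fun y' => (w x y' z).2 * kineticDensity v x y' z) y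
        + deriv (fun z' => verticalVelocity h w x y z' * kineticDensity v x y z') z := by
  have hw' := hw.differentiable one_ne_zero
  have hx : HasDerivAt (fun x' => (w x' y z).1 * kineticDensity v x' y z) _ x :=
    (hasDerivAt_partial₁ hw' x y z).fst.differentiableAt.hasDerivAt.mul
      (hasDerivAt_partial₁ hv x y z).differentiableAt.hasDerivAt.half_sq_add_sq
  have hy : HasDerivAt (fun y' => (w x y' z).2 * kineticDensity v x y' z) _ y :=
    (hasDerivAt_partial₂ hw' x y z).snd.differentiableAt.hasDerivAt.mul
      (hasDerivAt_partial₂ hv x y z).differentiableAt.hasDerivAt.half_sq_add_sq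
  rw [hx.deriv, hy.deriv, (hasDerivAt_verticalFlux hw hv x y z).deriv]
  simp only [bPE, div2, verticalVelocity, kineticDensity, Prod.fst_add, Prod.snd_add,
    Prod.fst_sub, Prod.snd_sub, Prod.smul_fst, Prod.smul_snd, smul_eq_mul]
  ring

end PrimitiveEquations

theorem inner_bPE_self_eq_zero_general
    (L h : ℝ)
    (w v : ℝ → ℝ → ℝ → ℝ × ℝ)
    (hw : ContDiff ℝ 1 (fun ζ : ℝ × ℝ × ℝ => w ζ.1 ζ.2.1 ζ.2.2))
    (hv : ContDiff ℝ 2 (fun ζ : ℝ × ℝ × ℝ => v ζ.1 ζ.2.1 ζ.2.2))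
    (hwperx : ∀ x y z, w (x + L) y z = w x y z)
    (hwpery : ∀ x y z, w x (y + L) z = w x y z)
    (hwdiv : ∀ x y,
      deriv (fun x' => (∫ z in (-h)..(0:ℝ), w x' y z).1) x
        + deriv (fun y' => (∫ z in (-h)..(0:ℝ), w x y' z).2) y = 0)
    (hvperx : ∀ x y z, v (x + L) y z = v x y z)
    (hvpery : ∀ x y z, v x (y + L) z = v x y z) :
    (∫ x in (0:ℝ)..L, ∫ y in (0:ℝ)..L, ∫ z in (-h)..(0:ℝ),
        ((bPE h w v x y z).1 * (v x y z).1 + (bPE h w v x y z).2 * (v x y z).2)) = 0 := by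
  have hw' : ContDiff ℝ 1 (uncurry₃ w) := hw
  have hv' : ContDiff ℝ 1 (uncurry₃ v) := hv.of_le one_le_two
  have hΦ₁ : ContDiff ℝ 1 (uncurry₃ fun x y z => (w x y z).1 * kineticDensity v x y z) :=
    hw'.fst.mul (contDiff_kineticDensity hv')
  have hΦ₂ : ContDiff ℝ 1 (uncurry₃ fun x y z => (w x y z).2 * kineticDensity v x y z) :=
    hw'.snd.mul (contDiff_kineticDensity hv')
  simp only [inner_bPE_eq_sum_deriv_flux hw' (hv'.differentiable one_ne_zero)]
  rw [integral3_add_add (continuous_partial₁ hΦ₁) (continuous_partial₂ hΦ₂)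
      (continuous_deriv_verticalFlux hw' hv'),
    integral3_deriv_partial₁_eq_zero hΦ₁ fun y z => ?perx,
    integral3_deriv_partial₂_eq_zero hΦ₂ fun x z => ?pery]
  · simp [integral_deriv_verticalFlux_eq_zero hw' hv' hwdiv]
  case perx => simp only [kineticDensity]; rw [← zero_add L, hwperx, hvperx]
  case pery => simp only [kineticDensity]; rw [← zero_add L, hwpery, hvpery]

/-- for `w ∈ V` and `v ∈ H²(O)²`, `⟨b(w,v), v⟩_{L²} = 0`. -/
theorem inner_bPE_self_eq_zero
    (L h : ℝ) (hL : 0 < L) (hh : 0 < h)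
    (w v : ℝ → ℝ → ℝ → ℝ × ℝ)
    (hw : ContDiff ℝ 1 (fun ζ : ℝ × ℝ × ℝ => w ζ.1 ζ.2.1 ζ.2.2))
    (hv : ContDiff ℝ 2 (fun ζ : ℝ × ℝ × ℝ => v ζ.1 ζ.2.1 ζ.2.2))
    (hwperx : ∀ x y z, w (x + L) y z = w x y z)
    (hwpery : ∀ x y z, w x (y + L) z = w x y z)
    (hwperz : ∀ x y z, w x y (z + h) = w x y z)
    (hweven : ∀ x y z, w x y (-z) = w x y z)
    (hwmean : (∫ x in (0:ℝ)..L, ∫ y in (0:ℝ)..L, ∫ z in (-h)..(0:ℝ), w x y z) = 0)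
    (hwdiv : ∀ x y,
      deriv (fun x' => (∫ z in (-h)..(0:ℝ), w x' y z).1) x
        + deriv (fun y' => (∫ z in (-h)..(0:ℝ), w x y' z).2) y = 0)
    (hvperx : ∀ x y z, v (x + L) y z = v x y z)
    (hvpery : ∀ x y z, v x (y + L) z = v x y z)
    (hvperz : ∀ x y z, v x y (z + h) = v x y z) :
    (∫ x in (0:ℝ)..L, ∫ y in (0:ℝ)..L, ∫ z in (-h)..(0:ℝ),
        ((bPE h w v x y z).1 * (v x y z).1 + (bPE h w v x y z).2 * (v x y z).2)) = 0 :=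
  inner_bPE_self_eq_zero_general L h w v hw hv hwperx hwpery hwdiv hvperx hvpery
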